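/- Let d ≥ 2 and let N_S, N_O be natural numbers with 1 ≤ N_S < d² and 1 ≤ N_O < d². Let ψ_0, …, ψ_{d²−1} and φ_0, …, φ_{d²−1} be two families of unit vectors in ℂ^d such that in each family the rank-one projections |ψ_y⟩⟨ψ_y| (respectively |φ_x⟩⟨φ_x|) are linearly independent over ℂ (hence each family of projections spans the full space of d×d complex matrices). Let Γ_1, …, Γ_{N_S} and Δ_1, …, Δ_{N_O} be arbitrary d×d complex matrices. Then both of the following hold: (a) there do NOT exist scalars λ_{i,y} ∈ ℂ and effects E_0, …, E_{d²−1} on ℂ^d with Tr((Σ_{i=1}^{N_S} λ_{i,y} Γ_i) · E_x) = |⟨ψ_y, φ_x⟩|² for all x, y ∈ {0,…,d²−1}; and (b) there do NOT exist scalars μ_{i,x} ∈ ℂ and density matrices ρ_0, …, ρ_{d²−1} on ℂ^d with Tr(ρ_y · (Σ_{i=1}^{N_O} μ_{i,x} Δ_i)) = |⟨ψ_y, φ_x⟩|² for all x, y ∈ {0,…,d²−1}. Hence observing the correlations p_Q(0|x,y) = |⟨ψ_y, φ_x⟩|² certifies that at least one of the preparations is not in the span of the free states Γ_i and at least one of the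 operation elements is not in the span of the free operation elements Δ_i. -/

import Mathlib

open Matrix Complex
open scoped ComplexOrder

/-- The rank-one projection (outer product) `|ψ⟩⟨ψ|` of a vector `ψ ∈ ℂ^d`. -/
noncomputable def outer {d : ℕ} (ψ : Fin d → ℂ) : Matrix (Fin d) (Fin d) ℂ :=
  Matrix.of fun i j => ψ i * (starRingEnd ℂ) (ψ j)

/-- The inner product `⟨ψ, φ⟩ = ∑ i, conj (ψ i) * φ i` on `ℂ^d`. -/
noncomputable def qinner {d : ℕ} (ψ φ : Fin d → ℂ) : ℂ :=
  ∑ i, (starRingEnd ℂ) (ψ i) * φ i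

/-- An effect (POVM element) on `ℂ^d`: both `E` and `1 - E` are positive semidefinite. -/
def IsEffect {d : ℕ} (E : Matrix (Fin d) (Fin d) ℂ) : Prop :=
  E.PosSemidef ∧ (1 - E).PosSemidef

/-- A density matrix on `ℂ^d`: positive semidefinite with trace 1. -/
def IsDensityMatrix {d : ℕ} (ρ : Matrix (Fin d) (Fin d) ℂ) : Prop :=
  ρ.PosSemidef ∧ ρ.trace = 1

/-!
The correlation table `p(x, y) = |⟨ψ_y, φ_x⟩|² = Tr(|ψ_y⟩⟨ψ_y| |φ_x⟩⟨φ_x|)` has rank `d²`: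
the trace pairing is nondegenerate, so pairing a basis of matrices against a spanning
family gives linearly independent rows. A realization with preparations in the span of
`N_S` matrices `Γ_i` writes every row as a combination of the `N_S` rows `x ↦ Tr(Γ_i E_x)`,
forcing `d² ≤ N_S`; dually for operations in the span of the `Δ_i`.
-/

open Submodule Set

section TracePairing

variable {K n κ : Type*} [Field K] [Fintype n]

def traceMulRight (B : κ → Matrix n n K) : Matrix n n K →ₗ[K] κ → K :=
  LinearMap.pi fun j => traceLinearMap n K K ∘ₗ LinearMap.mulRight K (B j)

theorem traceMulRight_injective {B : κ → Matrix n n K} (hB : span K (range B) = ⊤) :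
    Function.Injective (traceMulRight B) := by
  rw [← LinearMap.ker_eq_bot, eq_bot_iff]
  intro M hM
  have hker : span K (range B) ≤ LinearMap.ker (traceLinearMap n K K ∘ₗ LinearMap.mulLeft K M) :=
    span_le.mpr <| range_subset_iff.mpr fun j => congrFun hM j
  rw [hB] at hker
  rw [mem_bot, ext_iff_trace_mul_right]
  intro N
  simpa using hker (mem_top (x := N))

theorem span_range_eq_top_of_linearIndependent [Fintype κ] {B : κ → Matrix n n K}
    (hB : LinearIndependent K B) (hcard : Fintype.card κ = Fintype.card n ^ 2) :
    span K (range B) = ⊤ :=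
  hB.span_eq_top_of_card_eq_finrank' <| by simp [Module.finrank_matrix, hcard, sq]

theorem card_le_of_trace_mul_eq {ι ν : Type*} [Fintype ι] [Fintype ν]
    {A : ι → Matrix n n K} (hA : LinearIndependent K A)
    {B : κ → Matrix n n K} (hB : span K (range B) = ⊤)
    {Γ : ν → Matrix n n K} {C : ι → Matrix n n K} (hC : ∀ y, C y ∈ span K (range Γ))
    (E : κ → Matrix n n K) (h : ∀ y x, (C y * E x).trace = (A y * B x).trace) :
    Fintype.card ι ≤ Fintype.card ν := by
  have hrows : LinearIndependent K (traceMulRight B ∘ A) :=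
    hA.map' _ (LinearMap.ker_eq_bot.mpr (traceMulRight_injective hB))
  have hrows_eq : traceMulRight B ∘ A = traceMulRight E ∘ C :=
    funext fun y => funext fun x => (h y x).symm
  have hmem : range (traceMulRight B ∘ A) ⊆ span K (range (traceMulRight E ∘ Γ)) := by
    rw [hrows_eq, range_comp, range_comp, ← map_span]
    exact image_mono (range_subset_iff.mpr hC)
  calc Fintype.card ι ≤ Module.finrank K (span K (range (traceMulRight B ∘ A))) :=
        linearIndependent_iff_card_le_finrank_span.mp hrows
    _ ≤ Module.finrank K (span K (range (traceMulRight E ∘ Γ))) :=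
        have := FiniteDimensional.span_of_finite K (finite_range (traceMulRight E ∘ Γ))
        Submodule.finrank_mono (span_le.mpr hmem)
    _ ≤ Fintype.card ν := finrank_range_le_card _

end TracePairing

theorem trace_outer_mul_outer {d : ℕ} (u v : Fin d → ℂ) :
    (outer u * outer v).trace = ((‖qinner u v‖ ^ 2 : ℝ) : ℂ) := by
  have hnorm : ((‖qinner u v‖ ^ 2 : ℝ) : ℂ) = qinner u v * (starRingEnd ℂ) (qinner u v) := by
    rw [Complex.mul_conj, Complex.normSq_eq_norm_sq]
  rw [hnorm, qinner, map_sum, Finset.sum_mul_sum, Finset.sum_comm]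
  simp only [Matrix.trace, Matrix.diag, Matrix.mul_apply, outer, Matrix.of_apply]
  refine Finset.sum_congr rfl fun j _ => Finset.sum_congr rfl fun i _ => ?_
  simp only [map_mul, Complex.conj_conj]
  ring

theorem stmt_2_general (d NS NO : ℕ) (hNS2 : NS < d ^ 2) (hNO2 : NO < d ^ 2)
    (ψ : Fin (d ^ 2) → Fin d → ℂ)
    (hψli : LinearIndependent ℂ fun y => outer (ψ y))
    (φ : Fin (d ^ 2) → Fin d → ℂ)
    (hφli : LinearIndependent ℂ fun x => outer (φ x))
    (Γ : Fin NS → Matrix (Fin d) (Fin d) ℂ)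
    (Δ : Fin NO → Matrix (Fin d) (Fin d) ℂ) :
    (¬ ∃ (lam : Fin NS → Fin (d ^ 2) → ℂ)
        (E : Fin (d ^ 2) → Matrix (Fin d) (Fin d) ℂ),
        (∀ x, IsEffect (E x)) ∧
        ∀ (x : Fin (d ^ 2)) (y : Fin (d ^ 2)),
          ((∑ i, lam i y • Γ i) * E x).trace
            = ((‖qinner (ψ y) (φ x)‖ ^ 2 : ℝ) : ℂ)) ∧
    (¬ ∃ (μ : Fin NO → Fin (d ^ 2) → ℂ)
        (ρ : Fin (d ^ 2) → Matrix (Fin d) (Fin d) ℂ),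
        (∀ y, IsDensityMatrix (ρ y)) ∧
        ∀ (x : Fin (d ^ 2)) (y : Fin (d ^ 2)),
          (ρ y * (∑ i, μ i x • Δ i)).trace
            = ((‖qinner (ψ y) (φ x)‖ ^ 2 : ℝ) : ℂ)) := by
  have hcard : Fintype.card (Fin (d ^ 2)) = Fintype.card (Fin d) ^ 2 := by simp
  constructor
  · rintro ⟨lam, E, -, hp⟩
    have := card_le_of_trace_mul_eq hψli (span_range_eq_top_of_linearIndependent hφli hcard)
      (fun y => sum_smul_mem _ _ fun i _ => subset_span (mem_range_self i)) E
      fun y x => by rw [hp, trace_outer_mul_outer]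
    exact hNS2.not_ge (by simpa using this)
  · rintro ⟨μ, ρ, -, hp⟩
    have := card_le_of_trace_mul_eq hφli (span_range_eq_top_of_linearIndependent hψli hcard)
      (fun x => sum_smul_mem _ _ fun i _ => subset_span (mem_range_self i)) ρ
      fun x y => by rw [trace_mul_comm, hp, trace_mul_comm, trace_outer_mul_outer]
    exact hNO2.not_ge (by simpa using this)

/-- Corollary 1: with spanning families of pure preparations `ψ_y` and pure effects
`φ_x` (each of size `d²`, with linearly independent projections), the quantum
correlations `p_Q(0|x,y) = |⟨ψ_y, φ_x⟩|²` can be realized neither by preparations in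
the span of `N_S < d²` free states `Γ_i`, nor by operations whose POVM elements lie
in the span of `N_O < d²` free operation elements `Δ_i`. -/
theorem stmt_2 (d NS NO : ℕ) (hd : 2 ≤ d)
    (hNS1 : 1 ≤ NS) (hNS2 : NS < d ^ 2) (hNO1 : 1 ≤ NO) (hNO2 : NO < d ^ 2)
    (ψ : Fin (d ^ 2) → Fin d → ℂ) (hψu : ∀ y, qinner (ψ y) (ψ y) = 1)
    (hψli : LinearIndependent ℂ fun y => outer (ψ y))
    (φ : Fin (d ^ 2) → Fin d → ℂ) (hφu : ∀ x, qinner (φ x) (φ x) = 1)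
    (hφli : LinearIndependent ℂ fun x => outer (φ x))
    (Γ : Fin NS → Matrix (Fin d) (Fin d) ℂ)
    (Δ : Fin NO → Matrix (Fin d) (Fin d) ℂ) :
    (¬ ∃ (lam : Fin NS → Fin (d ^ 2) → ℂ)
        (E : Fin (d ^ 2) → Matrix (Fin d) (Fin d) ℂ),
        (∀ x, IsEffect (E x)) ∧
        ∀ (x : Fin (d ^ 2)) (y : Fin (d ^ 2)),
          ((∑ i, lam i y • Γ i) * E x).trace
            = ((‖qinner (ψ y) (φ x)‖ ^ 2 : ℝ) : ℂ)) ∧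
    (¬ ∃ (μ : Fin NO → Fin (d ^ 2) → ℂ)
        (ρ : Fin (d ^ 2) → Matrix (Fin d) (Fin d) ℂ),
        (∀ y, IsDensityMatrix (ρ y)) ∧
        ∀ (x : Fin (d ^ 2)) (y : Fin (d ^ 2)),
          (ρ y * (∑ i, μ i x • Δ i)).trace
            = ((‖qinner (ψ y) (φ x)‖ ^ 2 : ℝ) : ℂ)) :=
  stmt_2_general d NS NO hNS2 hNO2 ψ hψli φ hφli Γ Δ
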